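/- arXiv:2103.11656 — 4 statements merged into one kernel-verified Lean document; each statement's English description precedes it below -/
import Mathlib

section
/- Let 0 < r₁ < R and let ψ : [r₁, R] → ℝ be continuous with ψ(r₁) ≠ 0. Define F_n = ∫_{r₁}^{R} ψ(r)/r^n dr. Then F_n · (n · r₁^{n-1}) / ψ(r₁) → 1 as n → ∞; that is, F_n ∼ ψ(r₁)/(n r₁^{n-1}). -/
open Real Filter Set MeasureTheory Topology

/-!
Multiplied by `n a^(n-1)`, the weight `x ↦ 1 / x^n` becomes a kernel on `[a, b]` whose mass
`n/(n-1) (1 - (a/b)^(n-1))` tends to `1` and which tends to `0` uniformly on `[a + δ, ∞)` for every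
`δ > 0`. It is therefore an approximate identity at `a`, and integrating a function continuous on
`[a, b]` against it picks out the value at `a`.
-/

noncomputable def momentKernel (a : ℝ) (n : ℕ) (x : ℝ) : ℝ := n * a ^ (n - 1) / x ^ n

section momentKernel

variable {a b : ℝ}

lemma momentKernel_nonneg (ha : 0 ≤ a) (n : ℕ) {x : ℝ} (hx : 0 ≤ x) : 0 ≤ momentKernel a n x := by
  unfold momentKernel; positivity

lemma momentKernel_le (ha : 0 < a) (hab : a ≤ b) (n : ℕ) {x : ℝ} (hbx : b ≤ x) :
    momentKernel a n x ≤ n / a * (a / b) ^ n := by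
  have hb : 0 < b := ha.trans_le hab
  calc momentKernel a n x ≤ n * a ^ (n - 1) / b ^ n := by
        unfold momentKernel
        gcongr
    _ = n / a * (a / b) ^ n := by
        rcases Nat.eq_zero_or_pos n with rfl | hn
        · simp
        · obtain ⟨m, rfl⟩ := Nat.exists_eq_add_of_le' hn
          rw [div_pow, Nat.add_sub_cancel]
          field_simp
          ring

lemma tendstoUniformlyOn_momentKernel (ha : 0 < a) (hab : a < b) :
    TendstoUniformlyOn (momentKernel a) 0 atTop (Ici b) := by
  have hbound : Tendsto (fun n : ℕ => (n : ℝ) / a * (a / b) ^ n) atTop (𝓝 0) := by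
    have hb : 0 < b := ha.trans hab
    have hratio : a / b < 1 := (div_lt_one hb).2 hab
    have := (tendsto_self_mul_const_pow_of_lt_one (div_nonneg ha.le hb.le) hratio).div_const a
    rw [zero_div] at this
    exact this.congr fun n => by ring
  refine Metric.tendstoUniformlyOn_iff.2 fun ε hε => ?_
  filter_upwards [hbound.eventually (gt_mem_nhds hε)] with n hn x (hx : b ≤ x)
  have hx0 : 0 ≤ x := by linarith
  rw [Pi.zero_apply, dist_zero_left, Real.norm_of_nonneg (momentKernel_nonneg ha.le n hx0)]
  exact (momentKernel_le ha hab.le n hx).trans_lt hn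

lemma integral_momentKernel (ha : 0 < a) (hab : a ≤ b) {n : ℕ} (hn : 2 ≤ n) :
    ∫ x in a..b, momentKernel a n x = n / (n - 1) * (1 - (a / b) ^ (n - 1)) := by
  have hzero : (0 : ℝ) ∉ uIcc a b := by
    rw [uIcc_of_le hab]; rintro ⟨h0, -⟩; linarith
  obtain ⟨m, rfl⟩ := Nat.exists_eq_add_of_le' (by omega : 1 ≤ n)
  have hpow := integral_zpow (a := a) (b := b) (n := -((m + 1 : ℕ) : ℤ))
    (Or.inr ⟨by omega, hzero⟩)
  have hexp : -((m + 1 : ℕ) : ℤ) + 1 = -(m : ℤ) := by push_cast; ring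
  simp only [momentKernel, div_eq_mul_inv _ (_ ^ _), intervalIntegral.integral_const_mul,
    ← zpow_natCast, ← zpow_neg, hpow, hexp, Nat.add_sub_cancel]
  simp only [zpow_neg, zpow_natCast, Int.cast_neg, Int.cast_natCast, div_pow]
  push_cast
  field_simp
  ring

lemma tendsto_integral_momentKernel (ha : 0 < a) (hab : a < b) :
    Tendsto (fun n : ℕ => ∫ x in a..b, momentKernel a n x) atTop (𝓝 1) := by
  have hgeo : Tendsto (fun n : ℕ => (a / b) ^ (n - 1)) atTop (𝓝 0) :=
    (tendsto_pow_atTop_nhds_zero_of_lt_one (div_nonneg ha.le (ha.trans hab).le)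
      ((div_lt_one (ha.trans hab)).2 hab)).comp (tendsto_sub_atTop_nat 1)
  have hmass : Tendsto (fun n : ℕ => (n : ℝ) / (n - 1) * (1 - (a / b) ^ (n - 1))) atTop (𝓝 1) := by
    simpa [sub_eq_add_neg] using
      (tendsto_natCast_div_add_atTop (-1 : ℝ)).mul (tendsto_const_nhds.sub hgeo)
  refine hmass.congr' ?_
  filter_upwards [eventually_ge_atTop 2] with n hn
  exact (integral_momentKernel ha hab.le hn).symm

theorem tendsto_integral_momentKernel_smul {E : Type*} [NormedAddCommGroup E] [NormedSpace ℝ E]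
    [CompleteSpace E] (ha : 0 < a) (hab : a < b) {g : ℝ → E} (hg : ContinuousOn g (Icc a b)) :
    Tendsto (fun n : ℕ => ∫ x in a..b, momentKernel a n x • g x) atTop (𝓝 (g a)) := by
  have hpos : ∀ x ∈ Icc a b, 0 < x := fun x hx => ha.trans_le hx.1
  have hdecay (u : Set ℝ) (hu : IsOpen u) (hau : a ∈ u) :
      TendstoUniformlyOn (momentKernel a) 0 atTop (Icc a b \ u) := by
    obtain ⟨δ, hδ, hball⟩ := Metric.isOpen_iff.1 hu a hau
    refine (tendstoUniformlyOn_momentKernel ha (lt_add_of_pos_right a hδ)).mono ?_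
    rintro x ⟨hx, hxu⟩
    by_contra hlt
    rw [mem_Ici, not_le] at hlt
    exact hxu (hball (by rw [Metric.mem_ball, Real.dist_eq, abs_lt]; constructor <;> linarith [hx.1]))
  have hmeas : ∀ n, AEStronglyMeasurable (momentKernel a n) (volume.restrict (Icc a b)) :=
    fun n => ContinuousOn.aestronglyMeasurable
      (continuousOn_const.div (continuousOn_pow n) fun x hx => (pow_pos (hpos x hx) n).ne')
      measurableSet_Icc
  simp only [intervalIntegral.integral_of_le hab.le, ← integral_Icc_eq_integral_Ioc]
  exact tendsto_setIntegral_peak_smul_of_integrableOn_of_tendsto measurableSet_Icc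
    measurableSet_Icc subset_rfl self_mem_nhdsWithin measure_Icc_lt_top.ne
    (Eventually.of_forall fun n x hx => momentKernel_nonneg ha.le n (hpos x hx).le) hdecay
    (by simpa only [intervalIntegral.integral_of_le hab.le, ← integral_Icc_eq_integral_Ioc] using
      tendsto_integral_momentKernel ha hab)
    (Eventually.of_forall hmeas) hg.integrableOn_Icc
    (hg.continuousWithinAt (left_mem_Icc.2 hab.le))

end momentKernel

theorem moment_asymptotic_first_order (r₁ R : ℝ) (hr₁ : 0 < r₁) (hR : r₁ < R)
    (ψ : ℝ → ℝ) (hc : ContinuousOn ψ (Set.Icc r₁ R)) (hne : ψ r₁ ≠ 0) :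
    Tendsto (fun n : ℕ =>
        (∫ r in r₁..R, ψ r / r ^ n) * ((n : ℝ) * r₁ ^ ((n : ℝ) - 1)) / ψ r₁)
      atTop (nhds 1) := by
  have hlim := (tendsto_integral_momentKernel_smul hr₁ hR hc).div_const (ψ r₁)
  rw [div_self hne] at hlim
  refine hlim.congr' ?_
  filter_upwards [eventually_ge_atTop 1] with n hn
  have hrpow : r₁ ^ ((n : ℝ) - 1) = r₁ ^ (n - 1) := by
    rw [← Real.rpow_natCast, Nat.cast_sub hn, Nat.cast_one]
  rw [hrpow, ← intervalIntegral.integral_mul_const]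
  congr 1
  refine intervalIntegral.integral_congr fun x _ => ?_
  simp only [momentKernel, smul_eq_mul]
  ring
end

section
/- Let 0 < r₁ < R and let ψ : [r₁, R] → ℝ be continuously differentiable with ψ(r₁) = 0 and ψ'(r₁) ≠ 0. Define F_n = ∫_{r₁}^{R} ψ(r)/r^n dr. Then F_n ∼ ψ'(r₁)/(n² r₁^{n-2}) as n → ∞, i.e., F_n · n² r₁^{n-2} / ψ'(r₁) → 1. -/
/-!
Integrating `(ψ r / r ^ k)' = ψ' r / r ^ k - k ψ r / r ^ (k + 1)` over `[r₁, R]` and using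
`ψ r₁ = 0` gives `(n - 1) F_n = ∫ ψ' r / r ^ (n - 1) - ψ R / R ^ (n - 1)`, so the second-order
asymptotic reduces to the first-order one, `m a ^ m ∫ₐᵇ g t / t ^ (m + 1) → g a` for continuous
`g` (applied to `g = ψ'`, `m = n - 2`), the boundary term being geometrically small. The
first-order asymptotic is Laplace's method for the peak functions `t⁻¹ ^ m` on `[a, b]`,
normalised by the explicit value `m a ^ m ∫ₐᵇ t ^ -(m + 1) = 1 - (a / b) ^ m`.
-/

open Real Filter Set
open MeasureTheory intervalIntegral Topology

theorem hasDerivAt_div_pow {ψ : ℝ → ℝ} {ψ'r r : ℝ} (hψ : HasDerivAt ψ ψ'r r) (hr : r ≠ 0)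
    (k : ℕ) :
    HasDerivAt (fun x => ψ x / x ^ k) (ψ'r / r ^ k - k * (ψ r / r ^ (k + 1))) r := by
  refine (hψ.div (hasDerivAt_pow k r) (pow_ne_zero k hr)).congr_deriv ?_
  rcases k with _ | k
  · simp
  · rw [Nat.add_sub_cancel]
    field_simp
    ring

theorem mul_integral_div_pow_succ {a b : ℝ} (ha : 0 < a) (hab : a ≤ b) {ψ ψ' : ℝ → ℝ}
    (hder : ∀ r ∈ Icc a b, HasDerivAt ψ (ψ' r) r) (hψ' : IntervalIntegrable ψ' volume a b)
    (k : ℕ) :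
    k * ∫ r in a..b, ψ r / r ^ (k + 1) = ψ a / a ^ k - ψ b / b ^ k + ∫ r in a..b, ψ' r / r ^ k := by
  rw [← uIcc_of_le hab] at hder
  have hne : ∀ r ∈ uIcc a b, r ≠ 0 := fun r hr =>
    (ha.trans_le (by rw [uIcc_of_le hab] at hr; exact hr.1)).ne'
  have hψ : ContinuousOn ψ (uIcc a b) := fun r hr => (hder r hr).continuousAt.continuousWithinAt
  have hint' : IntervalIntegrable (fun r => ψ' r / r ^ k) volume a b := by
    simpa only [div_eq_mul_inv] using hψ'.mul_continuousOn (g := fun r => (r ^ k)⁻¹)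
      ((continuousOn_pow k).inv₀ fun r hr => pow_ne_zero k (hne r hr))
  have hint : IntervalIntegrable (fun r => ψ r / r ^ (k + 1)) volume a b :=
    (hψ.div (continuousOn_pow _) fun r hr => pow_ne_zero _ (hne r hr)).intervalIntegrable
  have ftc := integral_eq_sub_of_hasDerivAt
    (fun r hr => hasDerivAt_div_pow (hder r hr) (hne r hr) k) (hint'.sub (hint.const_mul k))
  rw [integral_sub hint' (hint.const_mul k), intervalIntegral.integral_const_mul] at ftc
  linarith

theorem mul_pow_mul_integral_one_div_pow_succ {a b : ℝ} (ha : 0 < a) (hab : a ≤ b) (n : ℕ) :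
    n * a ^ n * ∫ t in a..b, 1 / t ^ (n + 1) = 1 - (a / b) ^ n := by
  have h := mul_integral_div_pow_succ ha hab (fun r _ => hasDerivAt_const r (1 : ℝ))
    intervalIntegrable_const n
  simp only [zero_div, intervalIntegral.integral_zero, add_zero] at h
  rw [mul_assoc, mul_left_comm, h, div_pow]
  field_simp

theorem tendsto_integral_div_pow_succ_div_integral_one_div_pow_succ {a b : ℝ} (ha : 0 < a)
    (hab : a < b) {g : ℝ → ℝ} (hg : ContinuousOn g (Icc a b)) :
    Tendsto (fun n : ℕ => (∫ t in a..b, g t / t ^ (n + 1)) / ∫ t in a..b, 1 / t ^ (n + 1))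
      atTop (𝓝 (g a)) := by
  have hpos : ∀ t ∈ Icc a b, 0 < t := fun t ht => ha.trans_le ht.1
  have peak : ∀ f : ℝ → ℝ, ContinuousOn f (Icc a b) →
      Tendsto (fun n : ℕ => (∫ t in Icc a b, t⁻¹ ^ n)⁻¹ * ∫ t in a..b, f t / t ^ (n + 1))
        atTop (𝓝 (f a / a)) := by
    intro f hf
    have := tendsto_setIntegral_pow_smul_of_unique_maximum_of_isCompact_of_continuousOn
      (μ := volume) isCompact_Icc (c := fun t => t⁻¹)
      (continuousOn_inv₀.mono fun t ht => (hpos t ht).ne')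
      (fun t ht hta => inv_strictAnti₀ ha (lt_of_le_of_ne ht.1 (Ne.symm hta)))
      (fun t ht => (inv_pos.2 (hpos t ht)).le) (inv_pos.2 ha)
      (by rw [interior_Icc, closure_Ioo hab.ne]; exact left_mem_Icc.2 hab.le)
      (hf.div continuousOn_id fun t ht => (hpos t ht).ne')
    refine this.congr fun n => ?_
    rw [smul_eq_mul, integral_of_le hab.le, ← integral_Icc_eq_integral_Ioc]
    congr 1
    refine setIntegral_congr_fun measurableSet_Icc fun t ht => ?_
    simp only [smul_eq_mul, Pi.div_apply, id_eq, inv_pow, pow_succ]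
    field_simp
  have hone := peak (fun _ => 1) continuousOn_const
  have := (peak g hg).div hone (by positivity)
  rw [div_div_div_cancel_right₀ ha.ne', div_one] at this
  refine this.congr' ?_
  filter_upwards [hone.eventually_ne (by positivity)] with n hn
  exact mul_div_mul_left _ _ (left_ne_zero_of_mul hn)

theorem tendsto_mul_pow_mul_integral_div_pow_succ {a b : ℝ} (ha : 0 < a) (hab : a < b)
    {g : ℝ → ℝ} (hg : ContinuousOn g (Icc a b)) :
    Tendsto (fun n : ℕ => n * a ^ n * ∫ t in a..b, g t / t ^ (n + 1)) atTop (𝓝 (g a)) := by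
  have hq₀ : 0 ≤ a / b := div_nonneg ha.le (ha.trans hab).le
  have hq₁ : a / b < 1 := (div_lt_one (ha.trans hab)).2 hab
  have hgeom : Tendsto (fun n : ℕ => 1 - (a / b) ^ n) atTop (𝓝 1) := by
    simpa using tendsto_const_nhds.sub (tendsto_pow_atTop_nhds_zero_of_lt_one hq₀ hq₁)
  have := (tendsto_integral_div_pow_succ_div_integral_one_div_pow_succ ha hab hg).mul hgeom
  rw [mul_one] at this
  refine this.congr' ?_
  filter_upwards [eventually_ne_atTop 0] with n hn
  have hnorm := mul_pow_mul_integral_one_div_pow_succ ha hab.le n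
  have hI : ∫ t in a..b, 1 / t ^ (n + 1) ≠ 0 := by
    rintro hI
    rw [hI, mul_zero, eq_comm, sub_eq_zero] at hnorm
    exact (pow_lt_one₀ hq₀ hq₁ hn).ne hnorm.symm
  rw [← hnorm]
  field_simp

theorem tendsto_add_two_sq_div_add_one_mul_self :
    Tendsto (fun m : ℕ => ((m : ℝ) + 2) ^ 2 / ((m + 1) * m)) atTop (𝓝 1) := by
  have h := (((tendsto_const_nhds (x := (1 : ℝ))).add
    (tendsto_const_div_atTop_nhds_zero_nat (2 : ℝ))).pow 2).mul
    (tendsto_natCast_div_add_atTop (1 : ℝ))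
  rw [add_zero, one_pow, one_mul] at h
  refine h.congr' ?_
  filter_upwards [eventually_ne_atTop 0] with m hm
  field_simp

theorem moment_asymptotic_second_order (r₁ R : ℝ) (hr₁ : 0 < r₁) (hR : r₁ < R)
    (ψ ψ' : ℝ → ℝ)
    (hder : ∀ r ∈ Set.Icc r₁ R, HasDerivAt ψ (ψ' r) r)
    (hc : ContinuousOn ψ' (Set.Icc r₁ R))
    (h0 : ψ r₁ = 0) (hne : ψ' r₁ ≠ 0) :
    Tendsto (fun n : ℕ =>
        (∫ r in r₁..R, ψ r / r ^ n) * ((n : ℝ) ^ 2 * r₁ ^ ((n : ℝ) - 2)) / ψ' r₁)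
      atTop (nhds 1) := by
  have hR₀ : 0 < R := hr₁.trans hR
  have hdecay : Tendsto (fun m : ℕ => m * (r₁ / R) ^ m) atTop (𝓝 0) :=
    tendsto_self_mul_const_pow_of_lt_one (div_nonneg hr₁.le hR₀.le) ((div_lt_one hR₀).2 hR)
  have h := tendsto_add_two_sq_div_add_one_mul_self.mul
    (((tendsto_mul_pow_mul_integral_div_pow_succ hr₁ hR hc).div_const (ψ' r₁)).sub
      (hdecay.mul_const (ψ R / (R * ψ' r₁))))
  rw [div_self hne, zero_mul, sub_zero, one_mul] at h
  rw [← tendsto_add_atTop_iff_nat 2]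
  refine h.congr' ?_
  filter_upwards [eventually_ne_atTop 0] with m hm
  have ibp := mul_integral_div_pow_succ hr₁ hR.le hder (hc.intervalIntegrable_of_Icc hR.le) (m + 1)
  rw [h0, zero_div, zero_sub] at ibp
  rw [show ((m + 2 : ℕ) : ℝ) - 2 = m by push_cast; ring, Real.rpow_natCast]
  generalize ∫ r in r₁..R, ψ r / r ^ (m + 2) = F at ibp ⊢
  generalize ∫ r in r₁..R, ψ' r / r ^ (m + 1) = J at ibp ⊢
  push_cast at ibp ⊢
  obtain rfl : F = (J - ψ R / R ^ (m + 1)) / (m + 1) := by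
    rw [eq_div_iff (by positivity)]
    linarith
  rw [div_pow]
  field_simp
  ring
end

section
/- Let 0 < a < b. If ψ ∈ L²(a,b) satisfies ∫_a^b ψ(r)/r^{2n} dr = 0 for all integers n ≥ n₀ (for some fixed n₀ ∈ ℕ), then ψ = 0 almost everywhere on (a,b). -/
/-!
After the substitution `s = 1 / r²` the vanishing moments say that the integrable function
`r ↦ ψ r / r ^ (2 n₀)` is orthogonal on `[a, b]` to every polynomial in `1 / r²`. Since `r ↦ 1 / r²`
is injective on `[a, b]`, Stone–Weierstrass makes these polynomials uniformly dense in `C([a, b])`,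
so the function is orthogonal to every continuous function and hence vanishes almost everywhere.
-/

open MeasureTheory Set Polynomial Filter Topology

theorem exists_polynomial_comp_near_of_injOn {X : Type*} [TopologicalSpace X] {K : Set X}
    (hK : IsCompact K) {T g : X → ℝ} (hT : ContinuousOn T K) (hTK : InjOn T K)
    (hg : ContinuousOn g K) {ε : ℝ} (hε : 0 < ε) :
    ∃ p : ℝ[X], ∀ x ∈ K, |p.eval (T x) - g x| < ε := by
  have : CompactSpace K := isCompact_iff_compactSpace.mp hK
  let TK : C(K, ℝ) := ⟨K.domRestrict T, hT.domRestrict⟩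
  have hsep : (Algebra.adjoin ℝ {TK}).SeparatesPoints := fun x y hxy =>
    ⟨TK, ⟨TK, Algebra.subset_adjoin rfl, rfl⟩, fun h => hxy (Subtype.ext (hTK x.2 y.2 h))⟩
  obtain ⟨⟨q, hq⟩, hqg⟩ := ContinuousMap.exists_mem_subalgebra_near_continuous_of_separatesPoints
    _ hsep (K.domRestrict g) hg.domRestrict ε hε
  rw [Algebra.adjoin_singleton_eq_range_aeval] at hq
  obtain ⟨p, rfl⟩ := hq
  refine ⟨p, fun x hx => ?_⟩
  have hpx := hqg ⟨x, hx⟩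
  simp only [AlgHom.toRingHom_eq_coe, RingHom.coe_coe, aeval_continuousMap_apply,
    Real.norm_eq_abs] at hpx
  exact hpx

section Moments

variable {X : Type*} [TopologicalSpace X] [T2Space X] [MeasurableSpace X] [OpensMeasurableSpace X]
  {μ : Measure X} {K : Set X} {T f : X → ℝ}

theorem setIntegral_polynomial_comp_mul_eq_zero (hK : IsCompact K) (hT : ContinuousOn T K)
    (hf : IntegrableOn f K μ) (hmom : ∀ k : ℕ, ∫ x in K, T x ^ k * f x ∂μ = 0) (p : ℝ[X]) :
    ∫ x in K, p.eval (T x) * f x ∂μ = 0 := by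
  simp_rw [eval_eq_sum_range, Finset.sum_mul, mul_assoc]
  rw [integral_finsetSum _ fun k _ =>
    (IntegrableOn.continuousOn_mul (g := fun x => T x ^ k) (hT.pow k) hf hK).const_mul _]
  simp [integral_const_mul, hmom]

theorem setIntegral_mul_eq_zero_of_moments_eq_zero (hK : IsCompact K) (hT : ContinuousOn T K)
    (hTK : InjOn T K) (hf : IntegrableOn f K μ) (hmom : ∀ k : ℕ, ∫ x in K, T x ^ k * f x ∂μ = 0)
    {g : X → ℝ} (hg : ContinuousOn g K) : ∫ x in K, g x * f x ∂μ = 0 := by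
  have hbound : ∀ ε > 0, |∫ x in K, g x * f x ∂μ| ≤ ε * ∫ x in K, |f x| ∂μ := by
    intro ε hε
    obtain ⟨p, hp⟩ := exists_polynomial_comp_near_of_injOn hK hT hTK hg hε
    have hpT : ContinuousOn (fun x => p.eval (T x)) K := p.continuous.comp_continuousOn hT
    calc |∫ x in K, g x * f x ∂μ|
        = |∫ x in K, (g x - p.eval (T x)) * f x ∂μ| := by
          rw [← sub_zero (∫ x in K, g x * f x ∂μ),
            ← setIntegral_polynomial_comp_mul_eq_zero hK hT hf hmom p,
            ← integral_sub (IntegrableOn.continuousOn_mul hg hf hK)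
              (IntegrableOn.continuousOn_mul hpT hf hK)]
          simp_rw [sub_mul]
      _ ≤ ∫ x in K, ε * |f x| ∂μ := by
          rw [← Real.norm_eq_abs]
          refine norm_integral_le_of_norm_le (hf.abs.const_mul ε) ?_
          refine (ae_restrict_iff' hK.measurableSet).mpr (Eventually.of_forall fun x hx => ?_)
          rw [Real.norm_eq_abs, abs_mul, abs_sub_comm]
          exact mul_le_mul_of_nonneg_right (hp x hx).le (abs_nonneg _)
      _ = ε * ∫ x in K, |f x| ∂μ := integral_const_mul ε _
  have hlim : Tendsto (fun ε => ε * ∫ x in K, |f x| ∂μ) (𝓝[>] 0) (𝓝 0) := by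
    simpa using tendsto_nhdsWithin_of_tendsto_nhds
      ((continuous_mul_const (∫ x in K, |f x| ∂μ)).tendsto 0)
  exact abs_nonpos_iff.mp (ge_of_tendsto hlim (eventually_nhdsWithin_of_forall hbound))

end Moments

theorem ae_restrict_eq_zero_of_moments_eq_zero {E : Type*} [NormedAddCommGroup E]
    [NormedSpace ℝ E] [FiniteDimensional ℝ E] [MeasurableSpace E] [BorelSpace E]
    {μ : Measure E} {K : Set E} (hK : IsCompact K) {T f : E → ℝ} (hT : ContinuousOn T K)
    (hTK : InjOn T K) (hf : IntegrableOn f K μ)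
    (hmom : ∀ k : ℕ, ∫ x in K, T x ^ k * f x ∂μ = 0) :
    ∀ᵐ x ∂μ.restrict K, f x = 0 :=
  ae_eq_zero_of_integral_contDiff_smul_eq_zero hf.integrable.locallyIntegrable fun _ hg _ =>
    setIntegral_mul_eq_zero_of_moments_eq_zero hK hT hTK hf hmom hg.continuous.continuousOn

theorem totality_inverse_even_powers (a b : ℝ) (ha : 0 < a) (hab : a < b)
    (ψ : ℝ → ℝ) (hψ : MemLp ψ 2 (volume.restrict (Set.Ioo a b)))
    (n₀ : ℕ) (hmom : ∀ n : ℕ, n₀ ≤ n → (∫ r in a..b, ψ r / r ^ (2 * n)) = 0) :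
    ∀ᵐ r ∂(volume.restrict (Set.Ioo a b)), ψ r = 0 := by
  have hpos : ∀ r ∈ Icc a b, 0 < r := fun r hr => ha.trans_le hr.1
  have hT : ContinuousOn (fun r : ℝ => (r ^ 2)⁻¹) (Icc a b) :=
    (continuousOn_pow 2).inv₀ fun r hr => (pow_pos (hpos r hr) 2).ne'
  have hTinj : InjOn (fun r : ℝ => (r ^ 2)⁻¹) (Icc a b) := fun x hx y hy hxy => by
    rwa [inv_inj, pow_left_inj₀ (hpos x hx).le (hpos y hy).le two_ne_zero] at hxy
  have hψ1 : IntegrableOn ψ (Icc a b) :=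
    IntegrableOn.congr_set_ae (hψ.integrable one_le_two) Ioo_ae_eq_Icc.symm
  have hmom' : ∀ k : ℕ, ∫ r in Icc a b, ((r ^ 2)⁻¹) ^ k * (((r ^ 2)⁻¹) ^ n₀ * ψ r) = 0 := by
    intro k
    rw [← hmom (n₀ + k) le_self_add, intervalIntegral.integral_of_le hab.le,
      ← integral_Icc_eq_integral_Ioc]
    congr 1 with r
    rw [← mul_assoc, ← pow_add, inv_pow, ← pow_mul, add_comm k, div_eq_inv_mul]
  have hf0 := ae_restrict_eq_zero_of_moments_eq_zero isCompact_Icc hT hTinj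
    (IntegrableOn.continuousOn_mul (hT.pow n₀) hψ1 isCompact_Icc) hmom'
  refine ae_restrict_of_ae_restrict_of_subset Ioo_subset_Icc_self ?_
  filter_upwards [hf0, ae_restrict_mem measurableSet_Icc] with r hr hrI
  exact (mul_eq_zero.mp hr).resolve_left (pow_ne_zero _ (inv_ne_zero (pow_pos (hpos r hrI) 2).ne'))
end

section
/- Let 0 < a < b, n₀ ∈ ℕ, and ψ ∈ L²(a,b). If the set {n ∈ ℕ : n ≥ n₀ and ∫_a^b ψ(r)/r^{2n} dr ≠ 0} is finite and ψ ≠ 0 in L²(a,b), then there exists n ≥ n₀ with ∫_a^b ψ(r)/r^{2n} dr ≠ 0; consequently, if ψ ≠ 0 then infinitely many of the moments ∫_a^b ψ(r)/r^{2n} dr (n ≥ n₀) are nonzero. -/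
open MeasureTheory Set Filter Polynomial Topology

/-!
If all moments `∫ ψ r / r^(2n)` with `n ≥ N` vanish, then `r⁻²ᴺ ψ` has vanishing power moments
against `u r = r⁻²`. As `u` is continuous and injective on `[a, b] ⊆ (0, ∞)`,
Stone–Weierstrass makes the polynomials in `u` uniformly dense in `C([a, b])`, so `r⁻²ᴺ ψ`
integrates to zero against every continuous function and therefore vanishes almost everywhere.
-/

theorem exists_polynomial_near_comp_of_injOn {α : Type*} [TopologicalSpace α] {s : Set α}
    (hs : IsCompact s) {u g : α → ℝ} (hu : ContinuousOn u s) (hinj : InjOn u s)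
    (hg : ContinuousOn g s) {ε : ℝ} (hε : 0 < ε) :
    ∃ p : ℝ[X], ∀ x ∈ s, |p.eval (u x) - g x| < ε := by
  have := isCompact_iff_compactSpace.mp hs
  let v : C(s, ℝ) := ⟨s.domRestrict u, hu.domRestrict⟩
  have hsep : (aeval v).range.SeparatesPoints := fun x y hxy =>
    ⟨v, ⟨v, ⟨X, aeval_X (R := ℝ) v⟩, rfl⟩, fun h => hxy (Subtype.ext (hinj x.2 y.2 h))⟩
  obtain ⟨⟨q, p, rfl⟩, hq⟩ :=
    ContinuousMap.exists_mem_subalgebra_near_continuous_of_separatesPoints _ hsep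
      (s.domRestrict g) hg.domRestrict ε hε
  exact ⟨p, fun x hx => by simpa [v, aeval_continuousMap_apply] using hq ⟨x, hx⟩⟩

section

variable {α : Type*} [TopologicalSpace α] [T2Space α] [MeasurableSpace α] [OpensMeasurableSpace α]
  {μ : Measure α} {s : Set α} {f u : α → ℝ}

theorem setIntegral_mul_eq_zero_of_forall_near (hs : IsCompact s) (hf : IntegrableOn f s μ)
    {g : α → ℝ} (hg : ContinuousOn g s)
    (h : ∀ ε > 0, ∃ q : α → ℝ, ContinuousOn q s ∧ (∀ x ∈ s, |q x - g x| < ε) ∧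
      ∫ x in s, q x * f x ∂μ = 0) :
    ∫ x in s, g x * f x ∂μ = 0 := by
  have hbound : ∀ ε > 0, |∫ x in s, g x * f x ∂μ| ≤ ε * ∫ x in s, |f x| ∂μ := by
    intro ε hε
    obtain ⟨q, hq, hqg, hqf⟩ := h ε hε
    have hdiff : ∫ x in s, g x * f x ∂μ = ∫ x in s, (g x - q x) * f x ∂μ := by
      simp only [sub_mul]
      rw [integral_sub (hf.continuousOn_mul hg hs) (hf.continuousOn_mul hq hs), hqf, sub_zero]
    rw [hdiff, ← Real.norm_eq_abs, ← integral_const_mul]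
    refine norm_integral_le_of_norm_le (hf.abs.const_mul ε) ?_
    filter_upwards [ae_restrict_mem hs.measurableSet] with x hx
    rw [norm_mul, Real.norm_eq_abs, Real.norm_eq_abs, abs_sub_comm]
    exact mul_le_mul_of_nonneg_right (hqg x hx).le (abs_nonneg _)
  have hlim : Tendsto (fun ε => ε * ∫ x in s, |f x| ∂μ) (𝓝[>] 0) (𝓝 0) := by
    simpa using (tendsto_nhdsWithin_of_tendsto_nhds
      ((continuous_id.mul_const (∫ x in s, |f x| ∂μ)).tendsto 0))
  exact abs_nonpos_iff.mp <| ge_of_tendsto hlim <|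
    eventually_nhdsWithin_of_forall fun ε hε => hbound ε hε

theorem setIntegral_eval_mul_eq_zero_of_forall_pow (hs : IsCompact s) (hu : ContinuousOn u s)
    (hf : IntegrableOn f s μ) (h : ∀ n : ℕ, ∫ x in s, u x ^ n * f x ∂μ = 0) (p : ℝ[X]) :
    ∫ x in s, p.eval (u x) * f x ∂μ = 0 := by
  induction p using Polynomial.induction_on' with
  | add p q hp hq =>
    have hint : ∀ r : ℝ[X], IntegrableOn (fun x => r.eval (u x) * f x) s μ := fun r =>
      hf.continuousOn_mul (r.continuous.comp_continuousOn hu) hs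
    simp only [eval_add, add_mul]
    rw [integral_add (hint p) (hint q), hp, hq, add_zero]
  | monomial n c =>
    simp only [eval_monomial, mul_assoc]
    rw [integral_const_mul, h n, mul_zero]

end

section

variable {E : Type*} [NormedAddCommGroup E] [NormedSpace ℝ E] [FiniteDimensional ℝ E]
  [MeasurableSpace E] [BorelSpace E] {μ : Measure E} {s : Set E} {f u : E → ℝ}

theorem ae_restrict_eq_zero_of_forall_setIntegral_pow_mul_eq_zero (hs : IsCompact s)
    (hu : ContinuousOn u s) (hinj : InjOn u s) (hf : IntegrableOn f s μ)
    (h : ∀ n : ℕ, ∫ x in s, u x ^ n * f x ∂μ = 0) : f =ᵐ[μ.restrict s] 0 := by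
  have hcont : ∀ g : E → ℝ, Continuous g → ∫ x in s, g x * f x ∂μ = 0 := fun g hg =>
    setIntegral_mul_eq_zero_of_forall_near hs hf hg.continuousOn fun ε hε => by
      obtain ⟨p, hp⟩ := exists_polynomial_near_comp_of_injOn hs hu hinj hg.continuousOn hε
      exact ⟨fun x => p.eval (u x), p.continuous.comp_continuousOn hu, hp,
        setIntegral_eval_mul_eq_zero_of_forall_pow hs hu hf h p⟩
  exact ae_eq_zero_of_integral_contDiff_smul_eq_zero hf.integrable.locallyIntegrable
    fun g hg _ => hcont g hg.continuous

end

theorem ae_restrict_Icc_eq_zero_of_eventually_integral_div_pow_eq_zero {a b : ℝ} (ha : 0 < a)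
    (hab : a ≤ b) {ψ : ℝ → ℝ} (hψ : IntegrableOn ψ (Icc a b))
    (h : ∀ᶠ n in atTop, ∫ r in a..b, ψ r / r ^ (2 * n) = 0) :
    ψ =ᵐ[volume.restrict (Icc a b)] 0 := by
  obtain ⟨N, hN⟩ := eventually_atTop.mp h
  have hpos : ∀ r ∈ Icc a b, 0 < r := fun r hr => ha.trans_le hr.1
  have hu : ContinuousOn (fun r : ℝ => (r ^ 2)⁻¹) (Icc a b) :=
    (continuousOn_pow 2).inv₀ fun r hr => (pow_pos (hpos r hr) 2).ne'
  have hinj : InjOn (fun r : ℝ => (r ^ 2)⁻¹) (Icc a b) := fun x hx y hy hxy =>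
    (pow_left_inj₀ (hpos x hx).le (hpos y hy).le two_ne_zero).mp (inv_inj.mp hxy)
  have hmom : ∀ n : ℕ, ∫ r in Icc a b, ((r ^ 2)⁻¹) ^ n * (((r ^ 2)⁻¹) ^ N * ψ r) = 0 := by
    intro n
    rw [integral_Icc_eq_integral_Ioc, ← intervalIntegral.integral_of_le hab,
      ← hN (n + N) le_add_self]
    congr 1 with r
    rw [pow_mul, div_eq_inv_mul, inv_pow, pow_add]
    ring
  have hweighted := ae_restrict_eq_zero_of_forall_setIntegral_pow_mul_eq_zero isCompact_Icc hu
    hinj (hψ.continuousOn_mul (hu.pow N) isCompact_Icc) hmom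
  filter_upwards [hweighted, ae_restrict_mem measurableSet_Icc] with r hr hrs
  exact (mul_eq_zero.mp hr).resolve_left (pow_ne_zero _ (inv_ne_zero (pow_pos (hpos r hrs) 2).ne'))

theorem infinitely_many_nonzero_moments (a b : ℝ) (ha : 0 < a) (hab : a < b)
    (n₀ : ℕ) (ψ : ℝ → ℝ) (hψ : MemLp ψ 2 (volume.restrict (Set.Ioo a b))) :
    ({n : ℕ | n₀ ≤ n ∧ (∫ r in a..b, ψ r / r ^ (2 * n)) ≠ 0}.Finite →
        ψ =ᵐ[volume.restrict (Set.Ioo a b)] 0) ∧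
      (¬ ψ =ᵐ[volume.restrict (Set.Ioo a b)] 0 →
        {n : ℕ | n₀ ≤ n ∧ (∫ r in a..b, ψ r / r ^ (2 * n)) ≠ 0}.Infinite) := by
  have : IsFiniteMeasure (volume.restrict (Ioo a b)) :=
    isFiniteMeasure_restrict.mpr measure_Ioo_lt_top.ne
  have hψIcc : IntegrableOn ψ (Icc a b) :=
    IntegrableOn.congr_set_ae (hψ.integrable one_le_two) Ioo_ae_eq_Icc.symm
  have hzero : {n : ℕ | n₀ ≤ n ∧ (∫ r in a..b, ψ r / r ^ (2 * n)) ≠ 0}.Finite →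
      ψ =ᵐ[volume.restrict (Ioo a b)] 0 := by
    intro hfin
    have hvanish : ∀ᶠ n in atTop, ∫ r in a..b, ψ r / r ^ (2 * n) = 0 := by
      filter_upwards [Nat.cofinite_eq_atTop ▸ hfin.eventually_cofinite_notMem,
        eventually_ge_atTop n₀] with n hn hn₀
      simpa [hn₀] using hn
    exact ae_restrict_of_ae_restrict_of_subset Ioo_subset_Icc_self
      (ae_restrict_Icc_eq_zero_of_eventually_integral_div_pow_eq_zero ha hab.le hψIcc hvanish)
  exact ⟨hzero, fun hne hfin => hne (hzero hfin)⟩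
end
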